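/- arXiv:2309.00478 — 7 statements merged into one kernel-verified Lean document; each statement's English description precedes it below -/
import Mathlib

section
/- A clone C on a set A is equationally additive (the union of any two algebraic sets of the same arity is algebraic) if and only if the quaternary relation Δ_A = {(x1,x2,x3,x4) ∈ A^4 : x1 = x2 or x3 = x4} is algebraic with respect to C. -/
/-! Δ_A = {x | x 0 = x 1} ∪ {x | x 2 = x 3} is a union of two algebraic sets, which gives one
direction. Conversely, if X = {x | ∀ i, p i x = q i x} and Y = {x | ∀ k, r k x = s k x}, then
X ∪ Y = ⋂_{i,k} {x | (p i x, q i x, r k x, s k x) ∈ Δ_A}; each of these sets is the preimage of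
the algebraic set Δ_A under term operations of the clone, hence algebraic, and algebraic sets
are closed under arbitrary intersections. -/

/-- A clone on a set `A`: a family of finitary operations containing all
projections and closed under composition. -/
structure Clone (A : Type) where
  ops : ∀ n : ℕ, Set ((Fin n → A) → A)
  proj_mem : ∀ (n : ℕ) (i : Fin n), (fun x => x i) ∈ ops n
  comp_mem : ∀ (m n : ℕ) (f : (Fin n → A) → A) (g : Fin n → (Fin m → A) → A),
      f ∈ ops n → (∀ i, g i ∈ ops m) → (fun x => f (fun i => g i x)) ∈ ops m

/-- `X ⊆ A^n` is algebraic w.r.t. a family of operations `F`: it is the solution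
set of some system of equations between `n`-ary members of `F`. -/
def IsAlgSet {A : Type} (F : ∀ n : ℕ, Set ((Fin n → A) → A)) (n : ℕ)
    (X : Set (Fin n → A)) : Prop :=
  ∃ (I : Type) (p q : I → (Fin n → A) → A),
    (∀ i, p i ∈ F n) ∧ (∀ i, q i ∈ F n) ∧ X = {x | ∀ i, p i x = q i x}

/-- Equational additivity: unions of algebraic sets of the same arity are algebraic. -/
def EqAdditive {A : Type} (F : ∀ n : ℕ, Set ((Fin n → A) → A)) : Prop :=
  ∀ (n : ℕ) (X Y : Set (Fin n → A)),
    IsAlgSet F n X → IsAlgSet F n Y → IsAlgSet F n (X ∪ Y)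

/-- The quaternary relation `Δ_A`. -/
def Delta (A : Type) : Set (Fin 4 → A) := {x | x 0 = x 1 ∨ x 2 = x 3}

variable {A : Type}

theorem Clone.isAlgSet_setOf_eq (C : Clone A) {n : ℕ} (i j : Fin n) :
    IsAlgSet C.ops n {x | x i = x j} :=
  ⟨Unit, fun _ x => x i, fun _ x => x j, fun _ => C.proj_mem n i, fun _ => C.proj_mem n j,
    by simp⟩

theorem IsAlgSet.iInter {F : ∀ n : ℕ, Set ((Fin n → A) → A)} {n : ℕ} {ι : Type}
    {S : ι → Set (Fin n → A)} (hS : ∀ t, IsAlgSet F n (S t)) :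
    IsAlgSet F n (⋂ t, S t) := by
  choose I p q hp hq hS using hS
  refine ⟨Σ t, I t, fun m => p m.1 m.2, fun m => q m.1 m.2, fun m => hp m.1 m.2,
    fun m => hq m.1 m.2, ?_⟩
  ext x
  simp [hS, Sigma.forall]

theorem IsAlgSet.preimage {C : Clone A} {m n : ℕ} {R : Set (Fin m → A)}
    (hR : IsAlgSet C.ops m R) {h : Fin m → (Fin n → A) → A} (hh : ∀ l, h l ∈ C.ops n) :
    IsAlgSet C.ops n {x | (fun l => h l x) ∈ R} := by
  obtain ⟨I, p, q, hp, hq, rfl⟩ := hR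
  exact ⟨I, fun i x => p i fun l => h l x, fun i x => q i fun l => h l x,
    fun i => C.comp_mem n m _ _ (hp i) hh, fun i => C.comp_mem n m _ _ (hq i) hh, rfl⟩

/-- A clone `C` on `A` is equationally additive if and only if `Δ_A` is
algebraic with respect to `C`. -/
theorem stmt1 {A : Type} (C : Clone A) :
    EqAdditive C.ops ↔ IsAlgSet C.ops 4 (Delta A) := by
  constructor
  · intro hC
    exact hC 4 _ _ (C.isAlgSet_setOf_eq 0 1) (C.isAlgSet_setOf_eq 2 3)
  · rintro hΔ n _ _ ⟨I, p, q, hp, hq, rfl⟩ ⟨K, r, s, hr, hs, rfl⟩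
    have hunion : {x | ∀ i, p i x = q i x} ∪ {x | ∀ k, r k x = s k x} =
        ⋂ m : I × K, {x | (fun l => ![p m.1, q m.1, r m.2, s m.2] l x) ∈ Delta A} := by
      ext x
      simp [Delta, Prod.forall, forall_or_left, forall_or_right]
    rw [hunion]
    refine IsAlgSet.iInter fun m => hΔ.preimage fun l => ?_
    fin_cases l
    exacts [hp m.1, hq m.1, hr m.2, hs m.2]
end

section
/- For any set A, the relations Δ_A = {(x1,x2,x3,x4) ∈ A^4 : x1 = x2 or x3 = x4} and δ_A = {(x1,x2,x3) ∈ A^3 : x1 = x2 or x2 = x3} are primitive positively definable from each other: (x1,x2,x3) ∈ δ_A iff (x1,x2,x2,x3) ∈ Δ_A, and (x1,x2,x3,x4) ∈ Δ_A iff there exist y1, y2 ∈ A with (x1,x2,y1), (y1,x3,x4), (x2,x1,y2), (y2,x3,x4) all in δ_A. -/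
/-- The ternary relation `δ_A`. -/
def Delta3 (A : Type) : Set (Fin 3 → A) := {x | x 0 = x 1 ∨ x 1 = x 2}

/-- If `c ≠ d`, the last two constraints force `y₁ = y₂ = c`, and then the first two
read `a = b ∨ b = c` and `b = a ∨ a = c`, which together give `a = b`. -/
theorem eq_or_eq_iff_exists_chain {α : Sort*} (a b c d : α) :
    a = b ∨ c = d ↔ ∃ y₁ y₂ : α,
      (a = b ∨ b = y₁) ∧ (y₁ = c ∨ c = d) ∧ (b = a ∨ a = y₂) ∧ (y₂ = c ∨ c = d) := by
  constructor
  · rintro (hab | hcd)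
    · exact ⟨c, c, .inl hab, .inl rfl, .inl hab.symm, .inl rfl⟩
    · exact ⟨b, a, .inr rfl, .inr hcd, .inr rfl, .inr hcd⟩
  · rintro ⟨y₁, y₂, h₁, h₂, h₃, h₄⟩
    by_contra! ⟨hab, hcd⟩
    have hb : b = c := (h₁.resolve_left hab).trans (h₂.resolve_right hcd)
    have ha : a = c := (h₃.resolve_left (Ne.symm hab)).trans (h₄.resolve_right hcd)
    exact hab (ha.trans hb.symm)

/-- `Δ_A` and `δ_A` are primitive positively definable from each other. -/
theorem stmt5 {A : Type} :
    (∀ x : Fin 3 → A, x ∈ Delta3 A ↔ ![x 0, x 1, x 1, x 2] ∈ Delta A) ∧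
    (∀ x : Fin 4 → A, x ∈ Delta A ↔
      ∃ y1 y2 : A,
        ![x 0, x 1, y1] ∈ Delta3 A ∧ ![y1, x 2, x 3] ∈ Delta3 A ∧
        ![x 1, x 0, y2] ∈ Delta3 A ∧ ![y2, x 2, x 3] ∈ Delta3 A) :=
  ⟨fun _ => Iff.rfl,
    fun x => eq_or_eq_iff_exists_chain (x 0) (x 1) (x 2) (x 3)⟩
end

section
/- For any set A, the polymorphism clone of the ternary relation δ_A = {(x1,x2,x3) ∈ A^3 : x1 = x2 or x2 = x3} equals the polymorphism clone of Δ_A = {(x1,x2,x3,x4) ∈ A^4 : x1 = x2 or x3 = x4}, and both equal the clone of essentially at most unary operations on A (operations of the form (x1,...,xn) ↦ f(x_i) for some unary f). -/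
/-- `f` is a polymorphism of the `k`-ary relation `ρ`. -/
def IsPolymorphism {A : Type} {k : ℕ} (ρ : Set (Fin k → A)) {n : ℕ}
    (f : (Fin n → A) → A) : Prop :=
  ∀ r : Fin n → Fin k → A, (∀ j, r j ∈ ρ) → (fun i => f (fun j => r j i)) ∈ ρ

/-!
A polymorphism `f` of `δ_A` can change its value along at most one coordinate: if
changing `x i` from `a i` to `v` changes `f`, then applying `f` to the columns
`(a k, (update a i v) k, z k)`, which all lie in `δ_A`, forces `f z = f (update a i v)`
for every `z` with `z i = v`. Hence `f` factors through that coordinate, or is constant.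
Conversely every essentially unary operation preserves `Δ_A`, and
`δ_A(x, y, z) ↔ Δ_A(x, y, y, z)` gives `Pol Δ_A ⊆ Pol δ_A`.
-/

open Function

lemma eq_of_forall_update_eq {ι α β : Type*} [Finite ι] [DecidableEq ι] {f : (ι → α) → β}
    (h : ∀ x i a, f (update x i a) = f x) (x y : ι → α) : f x = f y := by
  have := Fintype.ofFinite ι
  suffices ∀ s : Finset ι, ∀ x, (∀ k ∉ s, x k = y k) → f x = f y from
    this Finset.univ x (by simp)
  intro s
  induction s using Finset.induction_on with
  | empty => exact fun x hx => congrArg f (funext fun k => hx k (Finset.notMem_empty k))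
  | insert i s _ ih =>
    intro x hx
    rw [← h x i (y i)]
    refine ih _ fun k hk => ?_
    by_cases hki : k = i
    · simp [hki]
    · simpa [hki] using hx k (by simp [hki, hk])

lemma exists_eq_comp_eval_of_update {ι α β : Type*} [Finite ι] [Nonempty ι] [DecidableEq ι]
    {f : (ι → α) → β}
    (hstep : ∀ a i v, f (update a i v) ≠ f a → ∀ z, z i = v → f z = f (update a i v)) :
    ∃ (i : ι) (u : α → β), f = fun x => u (x i) := by
  by_cases hdep : ∃ a i v, f (update a i v) ≠ f a
  · obtain ⟨a, i, v, hne⟩ := hdep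
    refine ⟨i, fun w => f (update a i w), funext fun z => ?_⟩
    by_cases hza : f (update a i (z i)) = f a
    · have hzb : f (update (update a i v) i (z i)) ≠ f (update a i v) := by
        rwa [update_idem, hza, ne_comm]
      simpa using hstep _ i (z i) hzb z rfl
    · exact hstep a i (z i) hza z rfl
  · push Not at hdep
    exact ⟨Classical.arbitrary ι, fun w => f fun _ => w,
      funext fun z => eq_of_forall_update_eq hdep z _⟩

section

variable {A : Type}

lemma isPolymorphism_comp_eval {k n : ℕ} {ρ : Set (Fin k → A)}
    (hρ : ∀ u : A → A, ∀ x ∈ ρ, u ∘ x ∈ ρ) (i : Fin n) (u : A → A) :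
    IsPolymorphism ρ fun x : Fin n → A => u (x i) :=
  fun r hr => hρ u (r i) (hr i)

lemma IsPolymorphism.preimage_comp {k l n : ℕ} {ρ : Set (Fin k → A)} {f : (Fin n → A) → A}
    (hf : IsPolymorphism ρ f) (σ : Fin k → Fin l) :
    IsPolymorphism ((· ∘ σ) ⁻¹' ρ) f :=
  fun r hr => hf (fun j => r j ∘ σ) hr

lemma comp_mem_delta {x : Fin 4 → A} (hx : x ∈ Delta A) (u : A → A) : u ∘ x ∈ Delta A := by
  rcases hx with h | h
  · exact Or.inl (congrArg u h)
  · exact Or.inr (congrArg u h)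

lemma delta3_eq_preimage_delta : Delta3 A = (· ∘ ![0, 1, 1, 2]) ⁻¹' Delta A := by
  ext x
  simp [Delta3, Delta]

lemma IsPolymorphism.delta3_update {n : ℕ} {f : (Fin n → A) → A}
    (hf : IsPolymorphism (Delta3 A) f) (a : Fin n → A) (i : Fin n) (v : A)
    (hne : f (update a i v) ≠ f a) (z : Fin n → A) (hz : z i = v) :
    f z = f (update a i v) := by
  have hcol : ∀ k, ![a k, update a i v k, z k] ∈ Delta3 A := by
    intro k
    by_cases hk : k = i
    · subst hk; simp [Delta3, hz]
    · simp [Delta3, hk]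
  have hrow := hf (fun k => ![a k, update a i v k, z k]) hcol
  simp only [Delta3, Set.mem_ofPred_eq, Matrix.cons_val_zero, Matrix.cons_val_one,
    Matrix.cons_val_two] at hrow
  exact (hrow.resolve_left hne.symm).symm

end

/-- The polymorphisms of `δ_A` coincide with the polymorphisms of `Δ_A`, and
both are exactly the essentially at most unary operations on `A`. -/
theorem stmt6 {A : Type} (n : ℕ) (f : (Fin (n + 1) → A) → A) :
    (IsPolymorphism (Delta3 A) f ↔ IsPolymorphism (Delta A) f) ∧
    (IsPolymorphism (Delta A) f ↔
      ∃ (i : Fin (n + 1)) (u : A → A), f = fun x => u (x i)) := by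
  have unary_pol : (∃ (i : Fin (n + 1)) (u : A → A), f = fun x => u (x i)) →
      IsPolymorphism (Delta A) f := by
    rintro ⟨i, u, rfl⟩
    exact isPolymorphism_comp_eval (fun u _ hx => comp_mem_delta hx u) i u
  have pol_delta3 (hf : IsPolymorphism (Delta A) f) : IsPolymorphism (Delta3 A) f :=
    delta3_eq_preimage_delta (A := A) ▸ hf.preimage_comp _
  have delta3_unary (hf : IsPolymorphism (Delta3 A) f) :
      ∃ (i : Fin (n + 1)) (u : A → A), f = fun x => u (x i) :=
    exists_eq_comp_eval_of_update hf.delta3_update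
  exact ⟨⟨fun hf => unary_pol (delta3_unary hf), pol_delta3⟩,
    ⟨fun hf => delta3_unary (pol_delta3 hf), unary_pol⟩⟩
end

section
/- A clone C on a set X is equationally additive if and only if for every subset B ⊆ X that is invariant under C (i.e., closed under all operations of C), the restricted clone C|_B = {f|_B : f ∈ C} is equationally additive. -/
/-- `B` is invariant under the clone `C`. -/
def Invariant {X : Type} (C : Clone X) (B : Set X) : Prop :=
  ∀ (n : ℕ) (f : (Fin n → X) → X), f ∈ C.ops n →
    ∀ x : Fin n → X, (∀ i, x i ∈ B) → f x ∈ B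

/-- The restriction `C|_B` of a clone `C` to a subset `B`: the operations on `B`
that agree on `B` with some member of `C`. -/
def Clone.restrict {X : Type} (C : Clone X) (B : Set X) : Clone B where
  ops n := {g | ∃ f ∈ C.ops n, ∀ x : Fin n → B, (g x : X) = f fun i => ↑(x i)}
  proj_mem n i := ⟨fun x => x i, C.proj_mem n i, fun _ => rfl⟩
  comp_mem m n f g hf hg := by
    obtain ⟨F, hF, hFe⟩ := hf
    choose G hG hGe using hg
    refine ⟨fun y => F fun i => G i y, C.comp_mem m n F G hF hG, fun x => ?_⟩
    rw [hFe]
    congr 1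
    funext i
    exact hGe i x

/-!
Algebraic subsets of `B^n` for `C|_B` are exactly the traces on `B^n` of algebraic subsets
of `X^n` for `C`, and taking traces commutes with unions; so additivity passes from `C` to
each `C|_B`. Conversely `X` itself is invariant, and `C|_X` is `C` up to the bijection
`X ≃ (univ : Set X)`.
-/

namespace Clone

variable {X : Type} {C : Clone X} {B : Set X} {n : ℕ}

theorem isAlgSet_restrict_preimage (hB : Invariant C B) {Z : Set (Fin n → X)}
    (hZ : IsAlgSet C.ops n Z) :
    IsAlgSet (C.restrict B).ops n ((Subtype.val ∘ ·) ⁻¹' Z) := by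
  obtain ⟨I, p, q, hp, hq, rfl⟩ := hZ
  refine ⟨I, fun i x => ⟨p i (Subtype.val ∘ x), hB n _ (hp i) _ fun j => (x j).2⟩,
    fun i x => ⟨q i (Subtype.val ∘ x), hB n _ (hq i) _ fun j => (x j).2⟩,
    fun i => ⟨p i, hp i, fun _ => rfl⟩, fun i => ⟨q i, hq i, fun _ => rfl⟩, ?_⟩
  ext x
  simp only [Set.mem_preimage, Set.mem_ofPred_eq, Subtype.ext_iff]

theorem exists_isAlgSet_of_isAlgSet_restrict {S : Set (Fin n → B)}
    (hS : IsAlgSet (C.restrict B).ops n S) :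
    ∃ Z, IsAlgSet C.ops n Z ∧ S = (Subtype.val ∘ ·) ⁻¹' Z := by
  obtain ⟨I, p, q, hp, hq, rfl⟩ := hS
  choose P hP hPe using hp
  choose Q hQ hQe using hq
  refine ⟨{y | ∀ i, P i y = Q i y}, ⟨I, P, Q, hP, hQ, rfl⟩, ?_⟩
  ext x
  simp only [Set.mem_preimage, Set.mem_ofPred_eq, Subtype.ext_iff, hPe, hQe]
  rfl

theorem invariant_univ (C : Clone X) : Invariant C Set.univ :=
  fun _ _ _ _ _ => trivial

theorem eqAdditive_restrict (hC : EqAdditive C.ops) (hB : Invariant C B) :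
    EqAdditive (C.restrict B).ops := by
  intro n S T hS hT
  obtain ⟨Z, hZ, rfl⟩ := exists_isAlgSet_of_isAlgSet_restrict hS
  obtain ⟨W, hW, rfl⟩ := exists_isAlgSet_of_isAlgSet_restrict hT
  rw [← Set.preimage_union]
  exact isAlgSet_restrict_preimage hB (hC n Z W hZ hW)

theorem eqAdditive_of_restrict_univ (hC : EqAdditive (C.restrict Set.univ).ops) :
    EqAdditive C.ops := by
  intro n Z W hZ hW
  have hval : Function.Surjective (Subtype.val ∘ · : (Fin n → (Set.univ : Set X)) → _) :=
    fun y => ⟨fun i => ⟨y i, trivial⟩, rfl⟩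
  obtain ⟨V, hV, hVeq⟩ := exists_isAlgSet_of_isAlgSet_restrict <|
    hC n _ _ (isAlgSet_restrict_preimage (invariant_univ C) hZ)
      (isAlgSet_restrict_preimage (invariant_univ C) hW)
  rw [← Set.preimage_union] at hVeq
  rwa [Set.preimage_injective.mpr hval hVeq]

end Clone

/-- A clone `C` on `X` is equationally additive if and only if its restriction
to every invariant subset is equationally additive. -/
theorem stmt11 {X : Type} (C : Clone X) :
    EqAdditive C.ops ↔
      ∀ B : Set X, Invariant C B → EqAdditive (C.restrict B).ops :=
  ⟨fun hC _ hB => Clone.eqAdditive_restrict hC hB,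
    fun h => Clone.eqAdditive_of_restrict_univ (h _ (Clone.invariant_univ C))⟩
end

section
/- Let A be a finite set with at least two elements, 0 ∈ A, and f: A^4 → A a function such that Δ_A = {x ∈ A^4 : f(x) = 0}, where Δ_A = {(x1,x2,x3,x4) : x1 = x2 or x3 = x4}. Then, in the algebra (A; f), there exists a unary polynomial operation p and an element i ∈ f(A^4) with i ≠ 0 such that p(0) = 0 and p(x) = i for every x ∈ A \ {0}. -/
/-!
Since `a ≠ b` for some `a b`, the polynomial `f(x, y, a, b)` takes the value `z` exactly when
`x = y`, and `f(u, z, v, z)` takes the value `z` exactly when `u = z` or `v = z`. Chaining the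
latter over the finitely many `c ≠ z` gives a unary polynomial `r` whose `z`-fiber is `A \ {z}`.
Then `p x = f(r x, r z, a, b)` takes the value `z` only at `z` and is constantly
`f(z, r z, a, b) ≠ z` on `A \ {z}`.
-/

/-- Polynomial operations of the algebra `(A; f)` with a single quaternary basic
operation `f`: generated by projections, constants and `f`. -/
inductive PolyF {A : Type} (f : (Fin 4 → A) → A) : ∀ n : ℕ, ((Fin n → A) → A) → Prop
  | proj {n : ℕ} (i : Fin n) : PolyF f n (fun x => x i)
  | const {n : ℕ} (a : A) : PolyF f n (fun _ => a)
  | app {n : ℕ} {g : Fin 4 → (Fin n → A) → A} :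
      (∀ i, PolyF f n (g i)) → PolyF f n (fun x => f fun i => g i x)

namespace PolyF

variable {A : Type} {f : (Fin 4 → A) → A}

theorem app₄ {n : ℕ} {p q r s : (Fin n → A) → A}
    (hp : PolyF f n p) (hq : PolyF f n q) (hr : PolyF f n r) (hs : PolyF f n s) :
    PolyF f n (fun x => f ![p x, q x, r x, s x]) := by
  have h : (fun x => f ![p x, q x, r x, s x])
      = fun x => f (fun i => (![p, q, r, s] : Fin 4 → (Fin n → A) → A) i x) := by
    funext x; congr 1; funext i; fin_cases i <;> rfl
  rw [h]
  exact app fun i => by fin_cases i <;> assumption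

end PolyF

section DiagonalFiber

variable {A : Type} {f : (Fin 4 → A) → A} {z : A}

theorem apply_eq_iff_of_ne (hf : ∀ v, f v = z ↔ v 0 = v 1 ∨ v 2 = v 3) {a b : A}
    (hab : a ≠ b) (x y : A) : f ![x, y, a, b] = z ↔ x = y := by
  simpa [hab] using hf ![x, y, a, b]

theorem apply_eq_iff_or (hf : ∀ v, f v = z ↔ v 0 = v 1 ∨ v 2 = v 3) (u v : A) :
    f ![u, z, v, z] = z ↔ u = z ∨ v = z := by
  simpa using hf ![u, z, v, z]

def memDetector (f : (Fin 4 → A) → A) (z a b w : A) (L : List A) (x : A) : A :=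
  L.foldr (fun c acc => f ![f ![x, c, a, b], z, acc, z]) w

theorem memDetector_eq_iff (hf : ∀ v, f v = z ↔ v 0 = v 1 ∨ v 2 = v 3) {a b w : A}
    (hab : a ≠ b) (hw : w ≠ z) (L : List A) (x : A) :
    memDetector f z a b w L x = z ↔ x ∈ L := by
  induction L with
  | nil => simpa [memDetector] using hw
  | cons c L ih =>
    simp only [memDetector, List.foldr_cons] at ih ⊢
    rw [apply_eq_iff_or hf, apply_eq_iff_of_ne hf hab, ih, List.mem_cons]

theorem polyF_memDetector (z a b w : A) (L : List A) :
    PolyF f 1 (fun x => memDetector f z a b w L (x 0)) := by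
  induction L with
  | nil => exact PolyF.const w
  | cons c L ih =>
    exact PolyF.app₄ (PolyF.app₄ (PolyF.proj 0) (PolyF.const c) (PolyF.const a)
      (PolyF.const b)) (PolyF.const z) ih (PolyF.const z)

end DiagonalFiber

/-- If `A` is finite with at least two elements and `f : A^4 → A` defines `Δ_A`
as its `z`-fiber, then `(A; f)` has a unary polynomial `p` and a value
`i ∈ f[A^4] \ {z}` with `p z = z` and `p x = i` for all `x ≠ z`. -/
theorem stmt14 {A : Type} [Finite A] (h2 : ∃ a b : A, a ≠ b) (z : A)
    (f : (Fin 4 → A) → A)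
    (hf : {x : Fin 4 → A | x 0 = x 1 ∨ x 2 = x 3} = {x | f x = z}) :
    ∃ p : A → A, PolyF f 1 (fun x => p (x 0)) ∧
      ∃ i : A, (∃ v : Fin 4 → A, f v = i) ∧ i ≠ z ∧
        p z = z ∧ ∀ x : A, x ≠ z → p x = i := by
  classical
  have := Fintype.ofFinite A
  obtain ⟨a, b, hab⟩ := h2
  have := nontrivial_of_ne a b hab
  obtain ⟨w, hw⟩ := exists_ne z
  have hfib : ∀ v, f v = z ↔ v 0 = v 1 ∨ v 2 = v 3 := fun v => (Set.ext_iff.mp hf v).symm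
  set r := memDetector f z a b w (Finset.univ.erase z).toList
  have hr : ∀ x, r x = z ↔ x ≠ z := fun x => by
    simp [r, memDetector_eq_iff hfib hab hw]
  have hrz : r z ≠ z := fun h => (hr z).mp h rfl
  refine ⟨fun x => f ![r x, r z, a, b], ?_, f ![z, r z, a, b], ⟨_, rfl⟩, ?_, ?_, ?_⟩
  · exact PolyF.app₄ (polyF_memDetector z a b w _) (PolyF.const _) (PolyF.const a)
      (PolyF.const b)
  · exact fun h => hrz ((apply_eq_iff_of_ne hfib hab _ _).mp h).symm
  · exact (apply_eq_iff_of_ne hfib hab _ _).mpr rfl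
  · intro x hx
    simp only [(hr x).mpr hx]
end

section
/- Let A be an algebra with a weak difference polynomial d. If the clone of polynomial operations of A is equationally additive (equivalently, Δ_A = {x ∈ A^4 : x1 = x2 or x3 = x4} is the solution set of a system of equations between quaternary polynomial operations), then for every congruence α of A strictly above the equality relation, the commutator [α, α] is strictly above the equality relation. -/
/-- Polynomial operations over a clone: generated by the clone, the constants
and the projections, closed under composition. -/
inductive PolyOp {A : Type} (C : Clone A) : ∀ n : ℕ, ((Fin n → A) → A) → Prop
  | base {n : ℕ} {f : (Fin n → A) → A} : f ∈ C.ops n → PolyOp C n f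
  | const {n : ℕ} (a : A) : PolyOp C n (fun _ => a)
  | proj {n : ℕ} (i : Fin n) : PolyOp C n (fun x => x i)
  | comp {m n : ℕ} {f : (Fin n → A) → A} {g : Fin n → (Fin m → A) → A} :
      PolyOp C n f → (∀ i, PolyOp C m (g i)) → PolyOp C m (fun x => f (fun i => g i x))

/-- The clone of polynomial operations of the algebra `(A; C)`. -/
def PolClone {A : Type} (C : Clone A) : Clone A where
  ops n := {f | PolyOp C n f}
  proj_mem n i := PolyOp.proj i
  comp_mem _ _ _ _ hf hg := PolyOp.comp hf hg

/-- A congruence of the algebra `(A; C)`: an equivalence relation compatible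
with all operations of the clone. -/
def IsCong {A : Type} (C : Clone A) (θ : A → A → Prop) : Prop :=
  Equivalence θ ∧ ∀ (n : ℕ) (f : (Fin n → A) → A), f ∈ C.ops n →
    ∀ x y : Fin n → A, (∀ i, θ (x i) (y i)) → θ (f x) (f y)

/-- `d` is a Mal'cev operation. -/
def IsMalcev {A : Type} (d : A → A → A → A) : Prop :=
  ∀ a b : A, d a b b = a ∧ d b b a = a

/-- The algebra `(A; C)` has a Mal'cev polynomial. -/
def HasMalcevPoly {A : Type} (C : Clone A) : Prop :=
  ∃ d : A → A → A → A,
    (fun x : Fin 3 → A => d (x 0) (x 1) (x 2)) ∈ (PolClone C).ops 3 ∧ IsMalcev d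

/-- `α` centralizes `β` modulo `η` (the term condition). -/
def Centralizes {A : Type} (C : Clone A) (α β η : A → A → Prop) : Prop :=
  ∀ (m k : ℕ) (p : (Fin (m + k) → A) → A), p ∈ (PolClone C).ops (m + k) →
    ∀ (a b : Fin m → A) (u v : Fin k → A),
      (∀ i, α (a i) (b i)) → (∀ i, β (u i) (v i)) →
      η (p (Fin.append a u)) (p (Fin.append a v)) →
      η (p (Fin.append b u)) (p (Fin.append b v))

/-- The term condition commutator `[α, β]`: the least congruence `η` such that
`α` centralizes `β` modulo `η` (realized as the intersection of all such). -/
def CommRel {A : Type} (C : Clone A) (α β : A → A → Prop) (x y : A) : Prop :=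
  ∀ η : A → A → Prop, IsCong C η → Centralizes C α β η → η x y

/-- The congruence of `(A; C)` generated by a binary relation `r`. -/
def CongGen {A : Type} (C : Clone A) (r : A → A → Prop) (x y : A) : Prop :=
  ∀ θ : A → A → Prop, IsCong C θ → (∀ a b, r a b → θ a b) → θ x y

/-!
If `[α, α]` were trivial, `α` would be abelian and `d` would be a Mal'cev operation on each
`α`-class, so every binary polynomial `f` would be affine on `α`-classes:
`f x' y = d (f x' y') (f x y') (f x y)`. Writing `Δ_A` as the solution set of equations
`p = q`, apply this to `(y, w) ↦ p (a, y, a, w)` and `(y, w) ↦ q (a, y, a, w)` for `a α b`: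
both sides at `(b, b)` are the same combination of values at points of `Δ_A`, where `p = q`.
Hence `(a, b, a, b) ∈ Δ_A`, i.e. `a = b`.
-/

section

variable {A : Type} {C : Clone A}

namespace PolyOp

theorem map_rel {θ : A → A → Prop} (hθ : IsCong C θ) {n : ℕ} {f : (Fin n → A) → A}
    (hf : PolyOp C n f) {x y : Fin n → A} (hxy : ∀ i, θ (x i) (y i)) : θ (f x) (f y) := by
  induction hf with
  | base h => exact hθ.2 _ _ h _ _ hxy
  | const a => exact hθ.1.refl a
  | proj i => exact hxy i
  | comp _ _ ihf ihg => exact ihf fun i => ihg i hxy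

theorem map_rel₂ {θ : A → A → Prop} (hθ : IsCong C θ) {f : A → A → A}
    (hf : PolyOp C 2 fun z => f (z 0) (z 1)) {x x' y y' : A} (hx : θ x x') (hy : θ y y') :
    θ (f x y) (f x' y') :=
  hf.map_rel hθ (x := ![x, y]) (y := ![x', y']) fun i => by fin_cases i <;> assumption

theorem comp₂ {f : A → A → A} (hf : PolyOp C 2 fun z => f (z 0) (z 1)) {m : ℕ}
    {g₀ g₁ : (Fin m → A) → A} (h₀ : PolyOp C m g₀) (h₁ : PolyOp C m g₁) :
    PolyOp C m fun z => f (g₀ z) (g₁ z) :=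
  PolyOp.comp (g := ![g₀, g₁]) hf fun i => by fin_cases i <;> assumption

theorem comp₃ {f : A → A → A → A} (hf : PolyOp C 3 fun z => f (z 0) (z 1) (z 2)) {m : ℕ}
    {g₀ g₁ g₂ : (Fin m → A) → A} (h₀ : PolyOp C m g₀) (h₁ : PolyOp C m g₁)
    (h₂ : PolyOp C m g₂) : PolyOp C m fun z => f (g₀ z) (g₁ z) (g₂ z) :=
  PolyOp.comp (g := ![g₀, g₁, g₂]) hf fun i => by fin_cases i <;> assumption

theorem comp₄ {f : (Fin 4 → A) → A} (hf : PolyOp C 4 f) {m : ℕ}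
    {g₀ g₁ g₂ g₃ : (Fin m → A) → A} (h₀ : PolyOp C m g₀) (h₁ : PolyOp C m g₁)
    (h₂ : PolyOp C m g₂) (h₃ : PolyOp C m g₃) :
    PolyOp C m fun z => f ![g₀ z, g₁ z, g₂ z, g₃ z] := by
  have h := PolyOp.comp (g := ![g₀, g₁, g₂, g₃]) hf fun i => by fin_cases i <;> assumption
  convert h using 3 with z
  funext i
  fin_cases i <;> rfl

end PolyOp

theorem isCong_commRel (α β : A → A → Prop) : IsCong C (CommRel C α β) :=
  ⟨⟨fun x _ hη _ => hη.1.refl x,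
    fun h η hη hc => hη.1.symm (h η hη hc),
    fun h₁ h₂ η hη hc => hη.1.trans (h₁ η hη hc) (h₂ η hη hc)⟩,
   fun n f hf _ _ hxy η hη hc => hη.2 n f hf _ _ fun i => hxy i η hη hc⟩

theorem centralizes_commRel (α β : A → A → Prop) : Centralizes C α β (CommRel C α β) :=
  fun m k p hp a b u v ha hu hpre η hη hc => hc m k p hp a b u v ha hu (hpre η hη hc)

theorem centralizes_eq_of_commRel_le_eq {α β : A → A → Prop}
    (h : ∀ x y, CommRel C α β x y → x = y) : Centralizes C α β (· = ·) :=
  fun m k p hp a b u v ha hu hpre =>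
    h _ _ <| centralizes_commRel α β m k p hp a b u v ha hu <|
      hpre ▸ (isCong_commRel α β).1.refl _

theorem Centralizes.eq_of_eq₂ {α β : A → A → Prop} (hc : Centralizes C α β (· = ·))
    {f : A → A → A} (hf : PolyOp C 2 fun z => f (z 0) (z 1)) {x x' y y' : A}
    (hx : α x x') (hy : β y y') (h : f x y = f x y') : f x' y = f x' y' :=
  hc 1 1 (fun z => f (z 0) (z 1)) hf (fun _ => x) (fun _ => x') (fun _ => y) (fun _ => y')
    (fun _ => hx) (fun _ => hy) h

def IsMalcevOn (α : A → A → Prop) (d : A → A → A → A) : Prop :=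
  ∀ x y, α x y → d x y y = x ∧ d y y x = x

/-- Apply the term condition to `H s t = d (f s t) (f x t) (f x y)`, whose values at `(x, y)` and
`(x, y')` are both `f x y`; its value at `(x', y)` is `f x' y`. -/
theorem Centralizes.eq_malcev₂ {α : A → A → Prop} (hα : IsCong C α)
    (hc : Centralizes C α α (· = ·)) {d : A → A → A → A}
    (hd : PolyOp C 3 fun z => d (z 0) (z 1) (z 2)) (hM : IsMalcevOn α d) {f : A → A → A}
    (hf : PolyOp C 2 fun z => f (z 0) (z 1)) {x x' y y' : A} (hx : α x x') (hy : α y y') :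
    f x' y = d (f x' y') (f x y') (f x y) := by
  have hH : PolyOp C 2 fun z => d (f (z 0) (z 1)) (f x (z 1)) (f x y) :=
    hd.comp₃ hf (hf.comp₂ (PolyOp.const x) (PolyOp.proj 1)) (PolyOp.const _)
  have hxy : d (f x y) (f x y) (f x y) = d (f x y') (f x y') (f x y) :=
    ((hM _ _ (hα.1.refl _)).2).trans
      (hM _ _ (hf.map_rel₂ hα (hα.1.refl x) hy)).2.symm
  have hx'y := hc.eq_of_eq₂ (f := fun s t => d (f s t) (f x t) (f x y)) hH hx hy hxy
  rwa [(hM _ _ (hf.map_rel₂ hα (hα.1.symm hx) (hα.1.refl y))).1] at hx'y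

theorem isAlgSet_coord_eq (K : Clone A) {n : ℕ} (i j : Fin n) :
    IsAlgSet K.ops n {x | x i = x j} :=
  ⟨Unit, fun _ x => x i, fun _ x => x j, fun _ => K.proj_mem n i, fun _ => K.proj_mem n j,
    Set.ext fun _ => ⟨fun h _ => h, fun h => h ()⟩⟩

theorem isAlgSet_delta {K : Clone A} (hK : EqAdditive K.ops) : IsAlgSet K.ops 4 (Delta A) :=
  hK 4 _ _ (isAlgSet_coord_eq K 0 1) (isAlgSet_coord_eq K 2 3)

end

/-- If an algebra has a weak difference polynomial `d` and its clone of
polynomial operations is equationally additive, then every congruence strictly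
above the equality relation has commutator `[α, α]` strictly above equality. -/
theorem stmt15 {A : Type} (C : Clone A) (d : A → A → A → A)
    (hd : (fun x : Fin 3 → A => d (x 0) (x 1) (x 2)) ∈ (PolClone C).ops 3)
    (hwd : ∀ θ : A → A → Prop, IsCong C θ → ∀ a b : A, θ a b →
      CommRel C θ θ (d a b b) a ∧ CommRel C θ θ a (d b b a))
    (hadd : EqAdditive (PolClone C).ops) :
    ∀ α : A → A → Prop, IsCong C α → (∃ a b : A, a ≠ b ∧ α a b) →
      ∃ a b : A, a ≠ b ∧ CommRel C α α a b := by
  rintro α hα ⟨a, b, hne, hab⟩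
  by_contra! htriv
  have hα₀ : ∀ x y, CommRel C α α x y → x = y := fun x y h => by_contra fun hxy => htriv x y hxy h
  have hM : IsMalcevOn α d := fun x y hxy =>
    ⟨hα₀ _ _ (hwd α hα x y hxy).1, (hα₀ _ _ (hwd α hα x y hxy).2).symm⟩
  have haffine : ∀ r, PolyOp C 4 r →
      r ![a, b, a, b] = d (r ![a, b, a, a]) (r ![a, a, a, a]) (r ![a, a, a, b]) := fun r hr =>
    (centralizes_eq_of_commRel_le_eq hα₀).eq_malcev₂ hα hd hM
      (f := fun y w => r ![a, y, a, w])
      (hr.comp₄ (PolyOp.const a) (PolyOp.proj 0) (PolyOp.const a) (PolyOp.proj 1))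
      hab (hα.1.symm hab)
  obtain ⟨I, p, q, hp, hq, hΔ⟩ := isAlgSet_delta hadd
  have hpq : ∀ x ∈ Delta A, ∀ i, p i x = q i x := fun x hx => by rwa [hΔ] at hx
  have habab : ![a, b, a, b] ∈ Delta A := by
    rw [hΔ]
    intro i
    rw [haffine _ (hp i), haffine _ (hq i), hpq ![a, b, a, a] (Or.inr rfl),
      hpq ![a, a, a, a] (Or.inl rfl), hpq ![a, a, a, b] (Or.inl rfl)]
  exact habab.elim hne hne
end

section
/- Let A and B be sets with A ⊆ B and A nonempty, A ≠ B. For each clone F on A, let Φ(F) be the clone on B of all operations g: B^n → B that preserve A and whose restriction to A^n lies in F. Then Φ is injective, and if F is equationally additive then Φ(F) is equationally additive. Consequently, there are at least as many equationally additive clones on B as on A. -/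
/-- The extension `Φ(F)` of a clone `F` on a subset `A ⊆ B` to the clone on `B`
of all operations preserving `A` whose restriction to `A` lies in `F`. -/
def extClone {B : Type} (A : Set B) (F : Clone A) : Clone B where
  ops n := {g | (∀ x : Fin n → B, (∀ i, x i ∈ A) → g x ∈ A) ∧
    ∃ f ∈ F.ops n, ∀ x : Fin n → A, (f x : B) = g fun i => ↑(x i)}
  proj_mem n i :=
    ⟨fun _ hx => hx i, fun x => x i, F.proj_mem n i, fun _ => rfl⟩
  comp_mem m n f g hf hg := by
    obtain ⟨hfP, F', hF', hFe⟩ := hf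
    choose G hG hGe using fun i => (hg i).2
    refine ⟨fun x hx => hfP _ fun i => (hg i).1 x hx,
      fun y => F' fun i => G i y, F.comp_mem m n F' G hF' hG, fun x => ?_⟩
    rw [hFe]
    congr 1
    funext i
    exact hGe i x

/-
Everything rests on the fact that a clone `D` on `Y` is equationally additive iff `Δ_Y` is
algebraic for `D`: one direction because `Δ_Y` is the union of `{y₀ = y₁}` and `{y₂ = y₃}`,
the other because feeding the four sides of two systems into the equations for `Δ_Y`
describes the union of their solution sets.

An operation `f` of `F` extends to `B` by an arbitrary default off `Aⁿ`, and such extensions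
lie in `Φ(F)`; this gives injectivity, and shows that a system for `Δ_A` in `F` extends to a
system for `Δ_B` on `A⁴`. Off `A⁴`, where `Φ(F)` imposes no restriction, the single equation
between the extensions of the projection `x ↦ x 0` by the defaults `b₁` and
`x ↦ if x ∈ Δ_B then b₁ else b₂` (with `b₁ ≠ b₂`) cuts out `Δ_B`.
-/

@[ext]
theorem Clone.ext {A : Type} {F G : Clone A} (h : F.ops = G.ops) : F = G := by
  cases F; cases G; simpa using h

theorem IsAlgSet.inter {A : Type} {F : ∀ n : ℕ, Set ((Fin n → A) → A)} {n : ℕ}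
    {X Y : Set (Fin n → A)} (hX : IsAlgSet F n X) (hY : IsAlgSet F n Y) :
    IsAlgSet F n (X ∩ Y) := by
  obtain ⟨I, p, q, hp, hq, rfl⟩ := hX
  obtain ⟨J, r, s, hr, hs, rfl⟩ := hY
  refine ⟨I ⊕ J, Sum.elim p r, Sum.elim q s, Sum.forall.2 ⟨hp, hr⟩, Sum.forall.2 ⟨hq, hs⟩, ?_⟩
  ext x
  simp [Sum.forall]

namespace Clone

variable {A : Type} (C : Clone A)

theorem isAlgSet_setOf_eq_s18 {n : ℕ} (i j : Fin n) : IsAlgSet C.ops n {x | x i = x j} :=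
  ⟨Unit, fun _ x => x i, fun _ x => x j, fun _ => C.proj_mem n i, fun _ => C.proj_mem n j,
    by simp⟩

theorem isAlgSet_delta_of_eqAdditive (hC : EqAdditive C.ops) : IsAlgSet C.ops 4 (Delta A) :=
  hC 4 _ _ (C.isAlgSet_setOf_eq_s18 0 1) (C.isAlgSet_setOf_eq_s18 2 3)

theorem comp_vecCons_mem {m : ℕ} {P : (Fin 4 → A) → A} (hP : P ∈ C.ops 4)
    {a b c d : (Fin m → A) → A} (ha : a ∈ C.ops m) (hb : b ∈ C.ops m) (hc : c ∈ C.ops m)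
    (hd : d ∈ C.ops m) : (fun x => P ![a x, b x, c x, d x]) ∈ C.ops m := by
  have h := C.comp_mem m 4 P ![a, b, c, d] hP (by
    intro l; fin_cases l <;> assumption)
  convert h using 3 with x
  ext l; fin_cases l <;> rfl

theorem eqAdditive_of_isAlgSet_delta (hΔ : IsAlgSet C.ops 4 (Delta A)) : EqAdditive C.ops := by
  obtain ⟨K, P, Q, hP, hQ, hΔ⟩ := hΔ
  rintro n _ _ ⟨I, p, q, hp, hq, rfl⟩ ⟨J, r, s, hr, hs, rfl⟩
  refine ⟨I × J × K, fun m x => P m.2.2 ![p m.1 x, q m.1 x, r m.2.1 x, s m.2.1 x],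
    fun m x => Q m.2.2 ![p m.1 x, q m.1 x, r m.2.1 x, s m.2.1 x],
    fun ⟨i, j, k⟩ => C.comp_vecCons_mem (hP k) (hp i) (hq i) (hr j) (hs j),
    fun ⟨i, j, k⟩ => C.comp_vecCons_mem (hQ k) (hp i) (hq i) (hr j) (hs j), ?_⟩
  have hsys : ∀ v : Fin 4 → A, (∀ k, P k v = Q k v) ↔ v 0 = v 1 ∨ v 2 = v 3 := fun v =>
    (Set.ext_iff.1 hΔ v).symm
  ext x
  simp only [Set.mem_union, Set.mem_ofPred_eq, Prod.forall, hsys]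
  simp [forall_or_left, forall_or_right]

end Clone

section extension

variable {B : Type} (A : Set B)

open Classical in
noncomputable def extendOp {n : ℕ} (d : (Fin n → B) → B) (f : (Fin n → A) → A)
    (x : Fin n → B) : B :=
  if h : ∀ i, x i ∈ A then f fun i => ⟨x i, h i⟩ else d x

variable {A} {n : ℕ} (d : (Fin n → B) → B) (f : (Fin n → A) → A)

theorem extendOp_of_forall_mem {x : Fin n → B} (h : ∀ i, x i ∈ A) :
    extendOp A d f x = f fun i => ⟨x i, h i⟩ :=
  dif_pos h

theorem extendOp_of_not_forall_mem {x : Fin n → B} (h : ¬∀ i, x i ∈ A) :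
    extendOp A d f x = d x :=
  dif_neg h

theorem extendOp_coe (x : Fin n → A) : extendOp A d f (fun i => x i) = f x :=
  extendOp_of_forall_mem d f fun i => (x i).2

variable {F : Clone A}

theorem extendOp_mem_extClone (hf : f ∈ F.ops n) : extendOp A d f ∈ (extClone A F).ops n :=
  ⟨fun x hx => by rw [extendOp_of_forall_mem d f hx]; exact Subtype.prop _,
    f, hf, fun x => (extendOp_coe d f x).symm⟩

theorem mem_ops_of_extendOp_mem_extClone (h : extendOp A d f ∈ (extClone A F).ops n) :
    f ∈ F.ops n := by
  obtain ⟨-, f', hf', hf'f⟩ := h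
  convert hf'
  funext x
  exact Subtype.coe_injective ((extendOp_coe d f x).symm.trans (hf'f x).symm)

theorem ops_subset_of_extClone_ops_subset [Nonempty B] {G : Clone A}
    (h : (extClone A F).ops n ⊆ (extClone A G).ops n) : F.ops n ⊆ G.ops n := fun f hf =>
  mem_ops_of_extendOp_mem_extClone (fun _ => Classical.ofNonempty) f
    (h (extendOp_mem_extClone _ f hf))

variable (A) in
theorem extClone_injective [Nonempty B] : Function.Injective (extClone A) := fun _ _ h =>
  have hops (n : ℕ) := congrArg (fun C => C.ops n) h
  Clone.ext <| funext fun n => (ops_subset_of_extClone_ops_subset (hops n).subset).antisymm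
    (ops_subset_of_extClone_ops_subset (hops n).symm.subset)

theorem isAlgSet_extClone_forall_mem_imp [Nonempty B] {S : Set (Fin n → B)}
    (hS : IsAlgSet F.ops n ((fun x i => (x i : B)) ⁻¹' S)) :
    IsAlgSet (extClone A F).ops n {x | (∀ i, x i ∈ A) → x ∈ S} := by
  obtain ⟨I, p, q, hp, hq, hpq⟩ := hS
  let d : (Fin n → B) → B := fun _ => Classical.ofNonempty
  refine ⟨I, fun i => extendOp A d (p i), fun i => extendOp A d (q i),
    fun i => extendOp_mem_extClone d _ (hp i), fun i => extendOp_mem_extClone d _ (hq i), ?_⟩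
  ext x
  by_cases hx : ∀ i, x i ∈ A
  · simp only [Set.mem_ofPred_eq, hx, forall_const, extendOp_of_forall_mem d _ hx,
      Subtype.coe_inj]
    exact Set.ext_iff.1 hpq fun i => ⟨x i, hx i⟩
  · simp [hx, extendOp_of_not_forall_mem d _ hx]

theorem isAlgSet_extClone_not_forall_mem_imp [Nontrivial B] (i : Fin n) (S : Set (Fin n → B)) :
    IsAlgSet (extClone A F).ops n {x | (¬∀ j, x j ∈ A) → x ∈ S} := by
  classical
  obtain ⟨b₁, b₂, hb⟩ := exists_pair_ne B
  let d : (Fin n → B) → B := fun x => if x ∈ S then b₁ else b₂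
  refine ⟨Unit, fun _ => extendOp A (fun _ => b₁) (· i), fun _ => extendOp A d (· i),
    fun _ => extendOp_mem_extClone _ _ (F.proj_mem n i),
    fun _ => extendOp_mem_extClone _ _ (F.proj_mem n i), ?_⟩
  ext x
  by_cases hx : ∀ i, x i ∈ A
  · simp [hx, extendOp_of_forall_mem _ _ hx]
  · simp only [Set.mem_ofPred_eq, hx, not_false_eq_true, forall_const,
      extendOp_of_not_forall_mem _ _ hx, d]
    split_ifs <;> simp [*]

theorem isAlgSet_extClone_of_isAlgSet_preimage [Nontrivial B] (i : Fin n) {S : Set (Fin n → B)}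
    (hS : IsAlgSet F.ops n ((fun x i => (x i : B)) ⁻¹' S)) : IsAlgSet (extClone A F).ops n S := by
  convert (isAlgSet_extClone_forall_mem_imp hS).inter
    (isAlgSet_extClone_not_forall_mem_imp i S) using 1
  ext x
  by_cases hx : ∀ i, x i ∈ A <;> simp only [Set.mem_inter_iff, Set.mem_ofPred_eq, hx] <;> simp

end extension

theorem delta_eq_preimage {B : Type} (A : Set B) :
    Delta A = (fun x i => (x i : B)) ⁻¹' Delta B := by
  ext x
  simp [Delta, Subtype.ext_iff]

theorem eqAdditive_extClone {B : Type} [Nontrivial B] {A : Set B} {F : Clone A}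
    (hF : EqAdditive F.ops) : EqAdditive (extClone A F).ops :=
  Clone.eqAdditive_of_isAlgSet_delta _ <| isAlgSet_extClone_of_isAlgSet_preimage 0 <|
    delta_eq_preimage A ▸ F.isAlgSet_delta_of_eqAdditive hF

/-- For `∅ ≠ A ⊊ B`, the map `Φ = extClone A` is injective and preserves
equational additivity; consequently there are at least as many equationally
additive clones on `B` as on `A`. -/
theorem stmt18 {B : Type} (A : Set B) (hne : A.Nonempty) (hpr : A ≠ Set.univ) :
    Function.Injective (extClone A) ∧
    (∀ F : Clone A, EqAdditive F.ops → EqAdditive (extClone A F).ops) ∧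
    ∃ Ψ : {F : Clone A // EqAdditive F.ops} → {G : Clone B // EqAdditive G.ops},
      Function.Injective Ψ := by
  obtain ⟨a, ha⟩ := hne
  obtain ⟨b, hb⟩ := (Set.ne_univ_iff_exists_notMem A).1 hpr
  have : Nontrivial B := nontrivial_of_ne a b (ne_of_mem_of_not_mem ha hb)
  exact ⟨extClone_injective A, fun _ => eqAdditive_extClone,
    Subtype.map (extClone A) fun _ => eqAdditive_extClone,
    Subtype.map_injective _ (extClone_injective A)⟩
end
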